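/- Let R be a ring and S : Mod-R a class of modules closed under quotients. Suppose M is a module satisfying the ascending chain condition on submodules that are quotients of modules in S (i.e., on 'S-torsion' submodules). Then M has a largest submodule T that is a sum of images of maps from modules in S, and if each module of S is finitely generated then T is finitely generated. -/

import Mathlib

/-- A submodule of `M` is `S`-torsion if it is the image of a (finite direct sum of)
module(s) from the class `S`. -/
def IsSTorsion (R : Type) [Ring R] (S : ModuleCat R → Prop) {M : Type}
    [AddCommGroup M] [Module R M] (T : Submodule R M) : Prop :=
  ∃ (n : ℕ) (A : Fin n → ModuleCat R) (f : ((i : Fin n) → A i) →ₗ[R] M),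
    (∀ i, S (A i)) ∧ LinearMap.range f = T

/-!
A sum of two `S`-torsion submodules is again `S`-torsion (take the direct sum of the two
families), so the ascending chain condition yields an `S`-torsion submodule `N` that is maximal
among `S`-torsion submodules. Then `N ⊔ range f` is `S`-torsion for every `f : A → M` with
`S A`, so maximality gives `range f ≤ N`: hence `N` is the sum `T` of all these images. Being the
image of a finite direct sum of modules of `S`, it is finitely generated when they are.
-/

section STorsion

variable {R : Type} [Ring R] {S : ModuleCat R → Prop} {M : Type} [AddCommGroup M] [Module R M]

theorem isSTorsion_range_pi {ι : Type*} [Finite ι] {A : ι → ModuleCat R} (hA : ∀ i, S (A i))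
    (f : ((i : ι) → A i) →ₗ[R] M) : IsSTorsion R S (LinearMap.range f) := by
  have e := Finite.equivFin ι
  refine ⟨Nat.card ι, A ∘ e.symm,
    f ∘ₗ (LinearEquiv.piCongrLeft R (fun i => A i) e.symm).toLinearMap, fun i => hA _, ?_⟩
  exact LinearMap.range_comp_of_range_eq_top _ (LinearEquiv.range _)

theorem isSTorsion_bot : IsSTorsion R S (⊥ : Submodule R M) :=
  ⟨0, Fin.elim0, 0, fun i => i.elim0, LinearMap.range_zero⟩

theorem isSTorsion_range {A : ModuleCat R} (hA : S A) (f : A →ₗ[R] M) :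
    IsSTorsion R S (LinearMap.range f) := by
  have h := isSTorsion_range_pi (S := S) (fun _ : Unit => hA)
    (f ∘ₗ (LinearEquiv.piUnique R fun _ : Unit => A).toLinearMap)
  rwa [LinearMap.range_comp_of_range_eq_top _ (LinearEquiv.range _)] at h

theorem IsSTorsion.sup {N₁ N₂ : Submodule R M} (h₁ : IsSTorsion R S N₁)
    (h₂ : IsSTorsion R S N₂) : IsSTorsion R S (N₁ ⊔ N₂) := by
  obtain ⟨n, A, f, hA, rfl⟩ := h₁
  obtain ⟨m, B, g, hB, rfl⟩ := h₂
  let e : ((i : Fin n ⊕ Fin m) → ↥(Sum.elim A B i)) ≃ₗ[R]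
      ((i : Fin n) → A i) × ((i : Fin m) → B i) :=
    LinearEquiv.sumPiEquivProdPi R _ _ _
  have h := isSTorsion_range_pi (S := S) (A := Sum.elim A B) (Sum.rec hA hB) (f.coprod g ∘ₗ e)
  rwa [LinearMap.range_comp_of_range_eq_top _ e.range, LinearMap.range_coprod] at h

theorem IsSTorsion.le_iSup_range {N : Submodule R M} (hN : IsSTorsion R S N) :
    N ≤ ⨆ (A : ModuleCat R) (_ : S A) (f : A →ₗ[R] M), LinearMap.range f := by
  obtain ⟨n, A, f, hA, rfl⟩ := hN
  rw [LinearMap.range_eq_map, ← LinearMap.iSup_range_single, Submodule.map_iSup]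
  refine iSup_le fun i => ?_
  rw [← LinearMap.range_comp]
  exact le_iSup₂_of_le (A i) (hA i) (le_iSup_of_le _ le_rfl)

theorem IsSTorsion.fg (hfin : ∀ A : ModuleCat R, S A → Module.Finite R A) {N : Submodule R M}
    (hN : IsSTorsion R S N) : N.FG := by
  obtain ⟨n, A, f, hA, rfl⟩ := hN
  have := fun i => hfin (A i) (hA i)
  exact Submodule.fg_range f

theorem wellFoundedGT_isSTorsion
    (hacc : ∀ c : ℕ → Submodule R M, (∀ n, c n ≤ c (n + 1)) →
      (∀ n, IsSTorsion R S (c n)) → ∃ n, ∀ m, n ≤ m → c m = c n) :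
    WellFoundedGT {N : Submodule R M // IsSTorsion R S N} := by
  refine wellFoundedGT_iff_monotone_chain_condition.2 fun a => ?_
  obtain ⟨n, hn⟩ := hacc (fun n => (a n).1) (fun n => a.mono n.le_succ) (fun n => (a n).2)
  exact ⟨n, fun m hm => Subtype.ext (hn m hm).symm⟩

theorem exists_maximal_isSTorsion [WellFoundedGT {N : Submodule R M // IsSTorsion R S N}] :
    ∃ N : Submodule R M, Maximal (IsSTorsion R S) N := by
  obtain ⟨⟨N, hN⟩, -, hmax⟩ :=
    (wellFounded_gt (α := {N : Submodule R M // IsSTorsion R S N})).has_min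
      Set.univ ⟨⟨⊥, isSTorsion_bot⟩, trivial⟩
  exact ⟨N, hN, fun N' hN' hle => (eq_of_le_of_not_lt hle (hmax ⟨N', hN'⟩ trivial)).ge⟩

theorem Maximal.iSup_range_eq {N : Submodule R M} (hN : Maximal (IsSTorsion R S) N) :
    ⨆ (A : ModuleCat R) (_ : S A) (f : A →ₗ[R] M), LinearMap.range f = N :=
  le_antisymm
    (iSup₂_le fun _ hA => iSup_le fun f =>
      le_sup_right.trans (hN.2 (hN.1.sup (isSTorsion_range hA f)) le_sup_left))
    hN.1.le_iSup_range

end STorsion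

theorem stmt4_general {R : Type} [Ring R] (S : ModuleCat R → Prop)
    {M : Type} [AddCommGroup M] [Module R M]
    (hacc : ∀ c : ℕ → Submodule R M, (∀ n, c n ≤ c (n + 1)) →
      (∀ n, IsSTorsion R S (c n)) → ∃ n, ∀ m, n ≤ m → c m = c n) :
    ∃ T : Submodule R M,
      (T = ⨆ (A : ModuleCat R) (_ : S A) (f : A →ₗ[R] M), LinearMap.range f) ∧
      (∀ (A : ModuleCat R) (f : A →ₗ[R] M), S A → LinearMap.range f ≤ T) ∧
      ((∀ A : ModuleCat R, S A → Module.Finite R A) → T.FG) := by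
  have := wellFoundedGT_isSTorsion hacc
  obtain ⟨N, hN⟩ : ∃ N : Submodule R M, Maximal (IsSTorsion R S) N := exists_maximal_isSTorsion
  refine ⟨_, rfl, fun A f hA => le_iSup₂_of_le A hA (le_iSup_of_le f le_rfl), fun hfin => ?_⟩
  rw [hN.iSup_range_eq]
  exact hN.1.fg hfin

/-- Let `S` be a class of modules closed under quotients, and let `M`
satisfy the ascending chain condition on `S`-torsion submodules.  Then `M` has a
largest submodule `T` that is the sum of the images of all maps from modules of `S`,
and if every module of `S` is finitely generated then `T` is finitely generated. -/
theorem stmt4 {R : Type} [Ring R] (S : ModuleCat R → Prop)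
    (hquot : ∀ (A : ModuleCat R) (N : Submodule R A), S A → S (ModuleCat.of R (A ⧸ N)))
    {M : Type} [AddCommGroup M] [Module R M]
    (hacc : ∀ c : ℕ → Submodule R M, (∀ n, c n ≤ c (n + 1)) →
      (∀ n, IsSTorsion R S (c n)) → ∃ n, ∀ m, n ≤ m → c m = c n) :
    ∃ T : Submodule R M,
      (T = ⨆ (A : ModuleCat R) (_ : S A) (f : A →ₗ[R] M), LinearMap.range f) ∧
      (∀ (A : ModuleCat R) (f : A →ₗ[R] M), S A → LinearMap.range f ≤ T) ∧
      ((∀ A : ModuleCat R, S A → Module.Finite R A) → T.FG) :=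
  stmt4_general S hacc
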